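/- Let μ be a compactly supported probability distribution on R^{d×d} whose support leaves a proper cone K invariant, and suppose E[A] is K-positive and ρ(E[A]) < 1. Then V(x) := ‖x‖_f, where f ∈ int K* is the left Perron eigenvector of E[A] giving ‖E[A]‖_f = ρ(E[A]), satisfies E[V(Ax)] ≤ ρ(E[A]) V(x) for all x ∈ R^d; i.e., V is a homogeneous Lyapunov function of degree 1 for the first-mean dynamics. -/

import Mathlib

open Matrix Set

/-- A proper cone: a nonempty-interior, closed, convex, pointed set closed under
nonnegative scalar multiplication. -/
def IsProperCone {d : ℕ} (K : Set (Fin d → ℝ)) : Prop :=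
  (∀ x ∈ K, ∀ c : ℝ, 0 ≤ c → c • x ∈ K) ∧ IsClosed K ∧ Convex ℝ K ∧
    (interior K).Nonempty ∧ ∀ x ∈ K, -x ∈ K → x = 0

/-- `M` leaves the cone `K` invariant: `M K ⊆ K`. -/
def LeavesInvariant {d : ℕ} (M : Matrix (Fin d) (Fin d) ℝ) (K : Set (Fin d → ℝ)) : Prop :=
  ∀ x ∈ K, M.mulVec x ∈ K

/-- `M` is `K`-positive: `M (K \ {0}) ⊆ interior K`. -/
def IsKPos {d : ℕ} (M : Matrix (Fin d) (Fin d) ℝ) (K : Set (Fin d → ℝ)) : Prop :=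
  ∀ x ∈ K, x ≠ 0 → M.mulVec x ∈ interior K

/-- The dual cone `K* = {f | fᵀ x ≥ 0 for all x ∈ K}`. -/
def dualConeSet {d : ℕ} (K : Set (Fin d → ℝ)) : Set (Fin d → ℝ) :=
  {f | ∀ x ∈ K, 0 ≤ f ⬝ᵥ x}

/-- The spectral radius of a real matrix: the supremum of the absolute values of its
(complex) eigenvalues. -/
noncomputable def specRad {d : ℕ} (M : Matrix (Fin d) (Fin d) ℝ) : ℝ :=
  sSup {r | ∃ z : ℂ, Module.End.HasEigenvalue (Matrix.toLin' (M.map Complex.ofReal)) z ∧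
    r = ‖z‖}

/-- `nrm` is a norm on `Fin d → ℝ`. -/
def IsVecNorm {d : ℕ} (nrm : (Fin d → ℝ) → ℝ) : Prop :=
  (∀ x, 0 ≤ nrm x) ∧ (∀ x, nrm x = 0 ↔ x = 0) ∧
    (∀ (c : ℝ) x, nrm (c • x) = |c| * nrm x) ∧ ∀ x y, nrm (x + y) ≤ nrm x + nrm y

/-- `nrm` is cone absolute with respect to `K`. -/
def IsConeAbsolute {d : ℕ} (K : Set (Fin d → ℝ)) (nrm : (Fin d → ℝ) → ℝ) : Prop :=
  ∀ x, nrm x = sInf {r | ∃ v ∈ K, ∃ w ∈ K, x = v - w ∧ r = nrm (v + w)}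

/-- `nrm` is cone linear with respect to `K`. -/
def IsConeLinear {d : ℕ} (K : Set (Fin d → ℝ)) (nrm : (Fin d → ℝ) → ℝ) : Prop :=
  ∃ f ∈ dualConeSet K, ∀ x ∈ K, nrm x = f ⬝ᵥ x

/-- A cone linear absolute norm with respect to `K`. -/
def IsCLANorm {d : ℕ} (K : Set (Fin d → ℝ)) (nrm : (Fin d → ℝ) → ℝ) : Prop :=
  IsVecNorm nrm ∧ IsConeAbsolute K nrm ∧ IsConeLinear K nrm

/-- The operator norm of a matrix induced by the vector norm `nrm`. -/
noncomputable def opNorm {d : ℕ} (nrm : (Fin d → ℝ) → ℝ) (M : Matrix (Fin d) (Fin d) ℝ) : ℝ :=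
  sSup {r | ∃ x : Fin d → ℝ, x ≠ 0 ∧ r = nrm (M.mulVec x) / nrm x}

/-- The cone linear absolute norm `‖·‖_f` induced by `f ∈ int K*`. -/
noncomputable def coneNorm {d : ℕ} (K : Set (Fin d → ℝ)) (f : Fin d → ℝ)
    (x : Fin d → ℝ) : ℝ :=
  sInf {r | ∃ v ∈ K, ∃ w ∈ K, x = v - w ∧ r = f ⬝ᵥ (v + w)}

open MeasureTheory Filter

instance matMeasurableSpace {d : ℕ} : MeasurableSpace (Matrix (Fin d) (Fin d) ℝ) :=
  inferInstanceAs (MeasurableSpace (Fin d → Fin d → ℝ))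

/-- The (topological) support of a measure on matrices. -/
def msupport {d : ℕ} (μ : Measure (Matrix (Fin d) (Fin d) ℝ)) :
    Set (Matrix (Fin d) (Fin d) ℝ) :=
  {A | ∀ U : Set (Matrix (Fin d) (Fin d) ℝ), IsOpen U → A ∈ U → μ U ≠ 0}

/-- `nrm` is a norm on `d × d` real matrices. -/
def IsMatNorm {d : ℕ} (nrm : Matrix (Fin d) (Fin d) ℝ → ℝ) : Prop :=
  (∀ M, 0 ≤ nrm M) ∧ (∀ M, nrm M = 0 ↔ M = 0) ∧
    (∀ (c : ℝ) M, nrm (c • M) = |c| * nrm M) ∧ ∀ M N, nrm (M + N) ≤ nrm M + nrm N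

/-- `E[‖A_k ⋯ A_1‖^p]` for `A_1, …, A_k` i.i.d. with law `μ`. -/
noncomputable def prodSeq {d : ℕ} (μ : Measure (Matrix (Fin d) (Fin d) ℝ))
    (nrm : Matrix (Fin d) (Fin d) ℝ → ℝ) (p : ℝ) (k : ℕ) : ℝ :=
  ∫ A : Fin k → Matrix (Fin d) (Fin d) ℝ,
    nrm ((List.ofFn A).reverse.prod) ^ p ∂(Measure.pi fun _ => μ)

/-- The `L^p`-norm joint spectral radius (`p`-radius)
`ρ_{p,μ} = lim_{k→∞} (E[‖A_k ⋯ A_1‖^p])^{1/(pk)}` (as a `limsup`). -/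
noncomputable def pRad {d : ℕ} (μ : Measure (Matrix (Fin d) (Fin d) ℝ))
    (nrm : Matrix (Fin d) (Fin d) ℝ → ℝ) (p : ℝ) : ℝ :=
  limsup (fun k : ℕ => prodSeq μ nrm p k ^ (1 / (p * k))) atTop

/-- The joint spectral radius
`ρ̂(M) = limsup_{k→∞} sup_{A_1,…,A_k ∈ M} ‖A_k ⋯ A_1‖^{1/k}`. -/
noncomputable def jsr {d : ℕ} (Mset : Set (Matrix (Fin d) (Fin d) ℝ))
    (nrm : Matrix (Fin d) (Fin d) ℝ → ℝ) : ℝ :=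
  limsup (fun k : ℕ => sSup {r | ∃ A : Fin k → Matrix (Fin d) (Fin d) ℝ,
    (∀ i, A i ∈ Mset) ∧ r = nrm ((List.ofFn A).reverse.prod) ^ ((1 : ℝ) / k)}) atTop

/-- The entrywise mean matrix `E[A]` of `μ`. -/
noncomputable def meanMat {d : ℕ} (μ : Measure (Matrix (Fin d) (Fin d) ℝ)) :
    Matrix (Fin d) (Fin d) ℝ :=
  Matrix.of fun i j => ∫ X, X i j ∂μ

/-!
The transpose of `E[A]` maps `K* \ {0}` into the interior of `K*`. Maximising `t` over the unit
vectors `g ∈ K*` with `E[A]ᵀ g - t g ∈ K*` (Collatz–Wielandt) produces, by Wielandt's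
perturbation argument, a left eigenvector `f ∈ int K*` with eigenvalue `r > 0`.

On `K` the norm `‖·‖_f` is the linear functional `f`, so for `x = v - w` with `v, w ∈ K`,
`E ‖A x‖_f ≤ E fᵀA(v + w) = fᵀE[A](v + w) = r fᵀ(v + w)`; the infimum over such decompositions
gives `E ‖A x‖_f ≤ r ‖x‖_f`. For the single matrix `E[A]` this makes `r` the induced operator
norm, attained on `int K`. Finally `‖E[A]ᵏ x‖ = O(rᵏ)`, which bounds every complex eigenvalue by
`r`, while `r` itself is an eigenvalue: `r = ρ(E[A])`.
-/

namespace IsProperCone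

variable {d : ℕ} {K : Set (Fin d → ℝ)}

theorem smul_mem (hK : IsProperCone K) {x : Fin d → ℝ} (hx : x ∈ K) {c : ℝ} (hc : 0 ≤ c) :
    c • x ∈ K :=
  hK.1 x hx c hc

theorem zero_mem (hK : IsProperCone K) : (0 : Fin d → ℝ) ∈ K := by
  obtain ⟨e, he⟩ := hK.2.2.2.1
  simpa using hK.smul_mem (interior_subset he) le_rfl

theorem add_mem (hK : IsProperCone K) {v w : Fin d → ℝ} (hv : v ∈ K) (hw : w ∈ K) :
    v + w ∈ K := by
  have hmid := hK.2.2.1 hv hw (by norm_num : (0 : ℝ) ≤ 1 / 2) (by norm_num : (0 : ℝ) ≤ 1 / 2)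
    (by norm_num)
  convert hK.smul_mem hmid (by norm_num : (0 : ℝ) ≤ 2) using 1
  module

theorem ne_univ (hK : IsProperCone K) (hd : 0 < d) : K ≠ univ := by
  intro hKu
  have h1 : (1 : Fin d → ℝ) ∈ K := hKu ▸ mem_univ _
  have h2 : -(1 : Fin d → ℝ) ∈ K := hKu ▸ mem_univ _
  simpa using congrFun (hK.2.2.2.2 1 h1 h2) ⟨0, hd⟩

end IsProperCone

section DualCone

variable {d : ℕ} {K : Set (Fin d → ℝ)}

theorem isClosed_dualConeSet : IsClosed (dualConeSet K) := by
  simp only [dualConeSet, ofPred_forall]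
  exact isClosed_biInter fun x _ =>
    isClosed_le continuous_const (continuous_id.dotProduct continuous_const)

theorem smul_mem_dualConeSet {f : Fin d → ℝ} (hf : f ∈ dualConeSet K) {c : ℝ} (hc : 0 ≤ c) :
    c • f ∈ dualConeSet K := fun x hx => by
  simpa [smul_dotProduct] using mul_nonneg hc (hf x hx)

theorem exists_pos_mul_norm_le_dotProduct {S : Set (Fin d → ℝ)} {a : Fin d → ℝ}
    (ha : a ∈ interior S) :
    ∃ ε > 0, ∀ b, (∀ s ∈ S, 0 ≤ s ⬝ᵥ b) → ε * ‖b‖ ≤ a ⬝ᵥ b := by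
  obtain ⟨ε, hε, hball⟩ := Metric.mem_nhds_iff.1 (mem_interior_iff_mem_nhds.1 ha)
  refine ⟨ε / 2, by positivity, fun b hb => ?_⟩
  have hmem : ∀ (c : ℝ) (i : Fin d), |c| = ε / 2 → a + Pi.single i c ∈ S := fun c i hc =>
    hball (by simp [Pi.norm_single, hc, hε])
  have hcoord : ∀ i, ε / 2 * |b i| ≤ a ⬝ᵥ b := by
    intro i
    have hp := hb _ (hmem (ε / 2) i (abs_of_pos (by positivity)))
    have hn := hb _ (hmem (-(ε / 2)) i (by rw [abs_neg, abs_of_pos (by positivity)]))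
    simp only [add_dotProduct, single_dotProduct] at hp hn
    cases abs_cases (b i) <;> nlinarith
  rw [← le_div_iff₀' (by positivity)]
  refine (pi_norm_le_iff_of_nonneg (div_nonneg (hb a (interior_subset ha)) (by positivity))).2
    fun i => ?_
  rw [le_div_iff₀' (by positivity), Real.norm_eq_abs]
  exact hcoord i

theorem dotProduct_pos_of_mem_interior {f : Fin d → ℝ} (hf : f ∈ dualConeSet K) (hf0 : f ≠ 0)
    {y : Fin d → ℝ} (hy : y ∈ interior K) : 0 < f ⬝ᵥ y := by
  obtain ⟨ε, hε, hle⟩ := exists_pos_mul_norm_le_dotProduct hy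
  have := hle f fun s hs => dotProduct_comm s f ▸ hf s hs
  rw [dotProduct_comm]
  exact lt_of_lt_of_le (by positivity) this

theorem mem_interior_dualConeSet (hK : IsProperCone K) {g : Fin d → ℝ}
    (hg : ∀ x ∈ K, x ≠ 0 → 0 < g ⬝ᵥ x) : g ∈ interior (dualConeSet K) := by
  set S := K ∩ Metric.sphere (0 : Fin d → ℝ) 1
  have hS : IsCompact S := (isCompact_sphere 0 1).inter_left hK.2.1
  have hnear : ∀ᶠ h in nhds g, ∀ x ∈ S, 0 < h ⬝ᵥ x := by
    refine hS.eventually_forall_of_forall_eventually fun x hx => ?_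
    refine (isOpen_lt continuous_const (continuous_fst.dotProduct continuous_snd)).mem_nhds ?_
    exact hg x hx.1 (ne_zero_of_mem_unit_sphere ⟨x, hx.2⟩)
  refine mem_interior_iff_mem_nhds.2 (hnear.mono fun h hh x hx => ?_)
  rcases eq_or_ne x 0 with rfl | hx0
  · simp
  have hxS : ‖x‖⁻¹ • x ∈ S :=
    ⟨hK.smul_mem hx (by positivity), by simp [norm_smul, hx0]⟩
  have := hh _ hxS
  rw [dotProduct_smul, smul_eq_mul] at this
  exact (pos_of_mul_pos_right this (by positivity)).le

theorem exists_ne_zero_mem_dualConeSet (hK : IsProperCone K) (hd : 0 < d) :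
    ∃ g ∈ dualConeSet K, g ≠ 0 := by
  obtain ⟨x₀, hx₀⟩ := (ne_univ_iff_exists_notMem K).1 (hK.ne_univ hd)
  obtain ⟨φ, u, hφK, hφx₀⟩ := geometric_hahn_banach_closed_point hK.2.2.1 hK.2.1 hx₀
  have hu : 0 < u := by simpa using hφK 0 hK.zero_mem
  have hφ : ∀ a ∈ K, φ a ≤ 0 := by
    intro a ha
    by_contra! hpos
    have := hφK _ (hK.smul_mem ha (by positivity : 0 ≤ (u + 1) / φ a))
    rw [φ.map_smul, smul_eq_mul, div_mul_cancel₀ _ hpos.ne'] at this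
    linarith
  set g : Fin d → ℝ := fun i => -φ (Pi.single i 1)
  have hg : ∀ x, g ⬝ᵥ x = -φ x := by
    intro x
    conv_rhs => rw [← LinearMap.sum_single_apply (φ := fun _ : Fin d => ℝ) x]
    simp only [g, dotProduct, map_sum, neg_mul, Finset.sum_neg_distrib, neg_inj]
    refine Finset.sum_congr rfl fun i _ => ?_
    rw [mul_comm, ← smul_eq_mul, ← map_smul, ← Pi.single_smul, smul_eq_mul, mul_one]
  refine ⟨g, fun x hx => by linarith [hg x, hφ x hx], fun h0 => ?_⟩
  have := hg x₀
  rw [h0, zero_dotProduct] at this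
  linarith

end DualCone

section Perron

open Pointwise Topology

variable {d : ℕ} {C : Set (Fin d → ℝ)}

theorem smul_mem_interior_of_smul_mem (hCs : ∀ x ∈ C, ∀ c : ℝ, 0 ≤ c → c • x ∈ C)
    {x : Fin d → ℝ} (hx : x ∈ interior C) {c : ℝ} (hc : 0 < c) : c • x ∈ interior C := by
  have hsub : c • C ⊆ C := by
    rintro _ ⟨y, hy, rfl⟩
    exact hCs y hy c hc.le
  exact interior_mono hsub (by rw [interior_smul₀ hc.ne']; exact smul_mem_smul_set hx)

theorem exists_pos_sub_smul_mem {y : Fin d → ℝ} (hy : y ∈ interior C) (x : Fin d → ℝ) :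
    ∃ δ : ℝ, 0 < δ ∧ y - δ • x ∈ C := by
  have hcont : Tendsto (fun δ : ℝ => y - δ • x) (𝓝 0) (𝓝 (y - (0 : ℝ) • x)) :=
    tendsto_const_nhds.sub (tendsto_id.smul_const x)
  rw [zero_smul, sub_zero] at hcont
  have hev := (hcont.eventually (mem_interior_iff_mem_nhds.1 hy)).filter_mono
    (nhdsWithin_le_nhds (s := Ioi 0))
  exact (hev.and self_mem_nhdsWithin).exists.imp fun δ h => ⟨h.2, h.1⟩

/-- The largest `t` occurring here is the Perron eigenvalue (Collatz–Wielandt). -/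
def collatzWielandtSet (C : Set (Fin d → ℝ)) (T : Matrix (Fin d) (Fin d) ℝ) :
    Set (ℝ × (Fin d → ℝ)) :=
  {p | 0 ≤ p.1 ∧ p.2 ∈ C ∧ ‖p.2‖ = 1 ∧ T *ᵥ p.2 - p.1 • p.2 ∈ C}

variable {T : Matrix (Fin d) (Fin d) ℝ} {ε : ℝ} {e : Fin d → ℝ}

theorem isCompact_collatzWielandtSet (hCc : IsClosed C) (hε : 0 < ε)
    (he : ∀ x ∈ C, ε * ‖x‖ ≤ x ⬝ᵥ e) : IsCompact (collatzWielandtSet C T) := by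
  obtain ⟨B, hB⟩ := (isCompact_closedBall (0 : Fin d → ℝ) 1).bddAbove_image
    (f := fun x => T *ᵥ x ⬝ᵥ e)
    ((continuous_const.matrix_mulVec continuous_id).dotProduct continuous_const).continuousOn
  have hclosed : IsClosed (collatzWielandtSet C T) :=
    (isClosed_le continuous_const continuous_fst).inter <|
      (hCc.preimage continuous_snd).inter <|
      (isClosed_eq (continuous_norm.comp continuous_snd) continuous_const).inter <|
      hCc.preimage ((continuous_const.matrix_mulVec continuous_snd).sub
        (continuous_fst.smul continuous_snd))
  refine ((isCompact_Icc (a := 0) (b := B / ε)).prod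
    (isCompact_closedBall (0 : Fin d → ℝ) 1)).of_isClosed_subset hclosed ?_
  rintro ⟨t, x⟩ ⟨ht, hx, hx1, hTx⟩
  have hxB : x ∈ Metric.closedBall (0 : Fin d → ℝ) 1 := by simp [hx1]
  have hslack := (mul_nonneg hε.le (norm_nonneg _)).trans (he _ hTx)
  have hxe := he x hx
  rw [sub_dotProduct, smul_dotProduct, smul_eq_mul, hx1, mul_one] at *
  refine ⟨⟨ht, (le_div_iff₀ hε).2 ?_⟩, hxB⟩
  nlinarith [hB ⟨x, hxB, rfl⟩]

theorem exists_pos_mem_collatzWielandtSet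
    (hT : ∀ x ∈ C, x ≠ 0 → T *ᵥ x ∈ interior C) (hCs : ∀ x ∈ C, ∀ c : ℝ, 0 ≤ c → c • x ∈ C)
    {x : Fin d → ℝ} (hx : x ∈ C) (hx0 : x ≠ 0) :
    ∃ p ∈ collatzWielandtSet C T, 0 < p.1 := by
  have hu : ‖x‖⁻¹ • x ∈ C := hCs x hx _ (by positivity)
  have hu0 : ‖x‖⁻¹ • x ≠ 0 := smul_ne_zero (by simpa using hx0) hx0
  obtain ⟨δ, hδ, hmem⟩ := exists_pos_sub_smul_mem (hT _ hu hu0) (‖x‖⁻¹ • x)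
  exact ⟨(δ, ‖x‖⁻¹ • x), ⟨hδ.le, hu, by simp [norm_smul, hx0], hmem⟩, hδ⟩

/-- Applying `T` pushes a nonzero slack `T x - t x` into the interior of `C`, which leaves
room to increase `t`. -/
theorem exists_gt_of_mem_collatzWielandtSet (hCs : ∀ x ∈ C, ∀ c : ℝ, 0 ≤ c → c • x ∈ C)
    (hε : 0 < ε) (he : ∀ x ∈ C, ε * ‖x‖ ≤ x ⬝ᵥ e) (hT : ∀ x ∈ C, x ≠ 0 → T *ᵥ x ∈ interior C)
    {t : ℝ} {x : Fin d → ℝ} (hp : (t, x) ∈ collatzWielandtSet C T)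
    (hslack : T *ᵥ x - t • x ≠ 0) : ∃ p ∈ collatzWielandtSet C T, t < p.1 := by
  obtain ⟨ht, hx, hx1, hg⟩ : 0 ≤ t ∧ x ∈ C ∧ ‖x‖ = 1 ∧ T *ᵥ x - t • x ∈ C := hp
  set h := T *ᵥ x
  have hh0 : h ≠ 0 := by
    intro h0
    have hg_e := (mul_pos hε (norm_pos_iff.2 hslack)).trans_le (he _ hg)
    have hx_e := (mul_nonneg hε.le (norm_nonneg x)).trans (he x hx)
    rw [h0, zero_sub, neg_dotProduct, smul_dotProduct, smul_eq_mul] at hg_e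
    nlinarith
  have hTg : T *ᵥ h - t • h ∈ interior C := by
    simpa [h, mulVec_sub, mulVec_smul] using hT _ hg hslack
  obtain ⟨δ, hδ, hmem⟩ := exists_pos_sub_smul_mem hTg h
  have hhC : h ∈ C := interior_subset (hT x hx (by simp [← norm_ne_zero_iff, hx1]))
  refine ⟨(t + δ, ‖h‖⁻¹ • h), ⟨by positivity, hCs h hhC _ (by positivity),
    by simp [norm_smul, hh0], ?_⟩, by simpa using hδ⟩
  convert hCs _ hmem ‖h‖⁻¹ (by positivity) using 1
  simp only [mulVec_smul, smul_sub, add_smul, smul_comm ‖h‖⁻¹]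
  abel

theorem exists_eigenvector_mem_interior (hCc : IsClosed C)
    (hCs : ∀ x ∈ C, ∀ c : ℝ, 0 ≤ c → c • x ∈ C) (hε : 0 < ε)
    (he : ∀ x ∈ C, ε * ‖x‖ ≤ x ⬝ᵥ e) (hne : ∃ x ∈ C, x ≠ 0)
    (hT : ∀ x ∈ C, x ≠ 0 → T *ᵥ x ∈ interior C) :
    ∃ r : ℝ, 0 < r ∧ ∃ x ∈ interior C, x ≠ 0 ∧ T *ᵥ x = r • x := by
  obtain ⟨x₀, hx₀, hx₀0⟩ := hne
  obtain ⟨p₀, hp₀, hp₀pos⟩ := exists_pos_mem_collatzWielandtSet hT hCs hx₀ hx₀0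
  obtain ⟨⟨r, x⟩, hp, hmax⟩ := (isCompact_collatzWielandtSet (T := T) hCc hε he).exists_isMaxOn
    ⟨p₀, hp₀⟩ continuous_fst.continuousOn
  have hr : 0 < r := hp₀pos.trans_le (hmax hp₀)
  have hx0 : x ≠ 0 := by simp [← norm_ne_zero_iff, hp.2.2.1]
  have heig : T *ᵥ x = r • x := by
    by_contra hne
    obtain ⟨q, hq, hrq⟩ := exists_gt_of_mem_collatzWielandtSet hCs hε he hT hp (sub_ne_zero.2 hne)
    exact (hmax hq).not_gt hrq
  refine ⟨r, hr, x, ?_, hx0, heig⟩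
  have := smul_mem_interior_of_smul_mem hCs (hT x hp.2.1 hx0) (inv_pos.2 hr)
  rwa [heig, smul_smul, inv_mul_cancel₀ hr.ne', one_smul] at this

end Perron

section DualPerron

variable {d : ℕ} {K : Set (Fin d → ℝ)} {M : Matrix (Fin d) (Fin d) ℝ}

theorem transpose_mulVec_dotProduct (M : Matrix (Fin d) (Fin d) ℝ) (f x : Fin d → ℝ) :
    Mᵀ *ᵥ f ⬝ᵥ x = f ⬝ᵥ M *ᵥ x := by
  rw [dotProduct_comm, dotProduct_transpose_mulVec]

theorem IsKPos.leavesInvariant (hK : IsProperCone K) (hpos : IsKPos M K) :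
    LeavesInvariant M K := fun x hx => by
  rcases eq_or_ne x 0 with rfl | hx0
  · simpa using hK.zero_mem
  · exact interior_subset (hpos x hx hx0)

theorem transpose_mulVec_mem_interior_dualConeSet (hK : IsProperCone K) (hpos : IsKPos M K)
    {f : Fin d → ℝ} (hf : f ∈ dualConeSet K) (hf0 : f ≠ 0) :
    Mᵀ *ᵥ f ∈ interior (dualConeSet K) :=
  mem_interior_dualConeSet hK fun x hx hx0 => by
    rw [transpose_mulVec_dotProduct]
    exact dotProduct_pos_of_mem_interior hf hf0 (hpos x hx hx0)

theorem exists_transpose_eigenvector_mem_interior_dualConeSet (hK : IsProperCone K) (hd : 0 < d)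
    (hpos : IsKPos M K) :
    ∃ r : ℝ, 0 < r ∧ ∃ f ∈ interior (dualConeSet K), f ≠ 0 ∧ Mᵀ *ᵥ f = r • f := by
  obtain ⟨e, he⟩ := hK.2.2.2.1
  obtain ⟨ε, hε, hle⟩ := exists_pos_mul_norm_le_dotProduct he
  refine exists_eigenvector_mem_interior (e := e) isClosed_dualConeSet
    (fun f hf c hc => smul_mem_dualConeSet hf hc) hε (fun f hf => ?_)
    (exists_ne_zero_mem_dualConeSet hK hd)
    (fun f hf hf0 => transpose_mulVec_mem_interior_dualConeSet hK hpos hf hf0)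
  rw [dotProduct_comm]
  exact hle f fun s hs => dotProduct_comm s f ▸ hf s hs

end DualPerron

section ConeNorm

variable {d : ℕ} {K : Set (Fin d → ℝ)} {f : Fin d → ℝ}

theorem IsProperCone.exists_sub_eq (hK : IsProperCone K) (x : Fin d → ℝ) :
    ∃ v ∈ K, ∃ w ∈ K, x = v - w := by
  obtain ⟨e, he⟩ := hK.2.2.2.1
  obtain ⟨δ, hδ, hmem⟩ := exists_pos_sub_smul_mem he (-x)
  refine ⟨δ⁻¹ • (e - δ • -x), hK.smul_mem hmem (by positivity),
    δ⁻¹ • e, hK.smul_mem (interior_subset he) (by positivity), ?_⟩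
  rw [smul_sub, smul_smul, inv_mul_cancel₀ hδ.ne', one_smul]
  abel

variable (hK : IsProperCone K) (hf : f ∈ dualConeSet K)
include hK hf

theorem coneNorm_sub_le {v w : Fin d → ℝ} (hv : v ∈ K) (hw : w ∈ K) :
    coneNorm K f (v - w) ≤ f ⬝ᵥ (v + w) :=
  csInf_le ⟨0, by rintro _ ⟨v', hv', w', hw', -, rfl⟩; exact hf _ (hK.add_mem hv' hw')⟩
    ⟨v, hv, w, hw, rfl, rfl⟩

omit hf in
theorem le_mul_coneNorm {x : Fin d → ℝ} {a c : ℝ} (hc : 0 ≤ c)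
    (h : ∀ v ∈ K, ∀ w ∈ K, x = v - w → a ≤ c * f ⬝ᵥ (v + w)) : a ≤ c * coneNorm K f x := by
  obtain ⟨v₀, hv₀, w₀, hw₀, hx⟩ := hK.exists_sub_eq x
  rw [coneNorm, ← smul_eq_mul, ← Real.sInf_smul_of_nonneg hc]
  refine le_csInf (Set.Nonempty.smul_set ⟨_, v₀, hv₀, w₀, hw₀, hx, rfl⟩) ?_
  rintro _ ⟨_, ⟨v, hv, w, hw, hxvw, rfl⟩, rfl⟩
  exact h v hv w hw hxvw

theorem coneNorm_nonneg (x : Fin d → ℝ) : 0 ≤ coneNorm K f x := by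
  simpa using le_mul_coneNorm hK (x := x) zero_le_one fun v hv w hw _ => by
    simpa using hf _ (hK.add_mem hv hw)

theorem coneNorm_of_mem {x : Fin d → ℝ} (hx : x ∈ K) : coneNorm K f x = f ⬝ᵥ x := by
  refine le_antisymm (by simpa using coneNorm_sub_le hK hf hx hK.zero_mem) ?_
  simpa using le_mul_coneNorm hK (x := x) zero_le_one fun v _ w hw hxvw => by
    rw [hxvw, one_mul, dotProduct_sub, dotProduct_add]
    linarith [hf w hw]

theorem coneNorm_add_le (x y : Fin d → ℝ) :
    coneNorm K f (x + y) ≤ coneNorm K f x + coneNorm K f y := by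
  rw [← sub_le_iff_le_add, ← one_mul (coneNorm K f x)]
  refine le_mul_coneNorm hK zero_le_one fun v hv w hw hx => ?_
  rw [sub_le_iff_le_add', ← sub_le_iff_le_add, ← one_mul (coneNorm K f y)]
  refine le_mul_coneNorm hK zero_le_one fun v' hv' w' hw' hy => ?_
  have := coneNorm_sub_le hK hf (hK.add_mem hv hv') (hK.add_mem hw hw')
  rw [hx, hy, one_mul, one_mul, sub_le_iff_le_add, ← dotProduct_add]
  rwa [show v - w + (v' - w') = v + v' - (w + w') by abel,
    show v' + w' + (v + w) = v + v' + (w + w') by abel]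

theorem coneNorm_smul_le {c : ℝ} (hc : 0 ≤ c) (x : Fin d → ℝ) :
    coneNorm K f (c • x) ≤ c * coneNorm K f x :=
  le_mul_coneNorm hK hc fun v hv w hw hx => by
    simpa [hx, smul_sub, ← smul_add, dotProduct_smul] using
      coneNorm_sub_le hK hf (hK.smul_mem hv hc) (hK.smul_mem hw hc)

theorem convexOn_coneNorm : ConvexOn ℝ univ (coneNorm K f) :=
  ⟨convex_univ, fun x _ y _ _ _ ha hb _ =>
    (coneNorm_add_le hK hf _ _).trans
      (add_le_add (coneNorm_smul_le hK hf ha x) (coneNorm_smul_le hK hf hb y))⟩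

theorem continuous_coneNorm : Continuous (coneNorm K f) :=
  continuousOn_univ.1 ((convexOn_coneNorm hK hf).continuousOn isOpen_univ)

theorem coneNorm_mulVec_le {M : Matrix (Fin d) (Fin d) ℝ} (hM : LeavesInvariant M K) {r : ℝ}
    (hr : 0 ≤ r) (heig : Mᵀ *ᵥ f = r • f) (x : Fin d → ℝ) :
    coneNorm K f (M *ᵥ x) ≤ r * coneNorm K f x :=
  le_mul_coneNorm hK hr fun v hv w hw hx => by
    simpa [hx, mulVec_sub, ← mulVec_add, ← transpose_mulVec_dotProduct, heig, mul_add] using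
      coneNorm_sub_le hK hf (hM v hv) (hM w hw)

omit hf in
theorem exists_pos_mul_norm_le_coneNorm (hf : f ∈ interior (dualConeSet K)) :
    ∃ ε > 0, ∀ x, ε * ‖x‖ ≤ coneNorm K f x := by
  obtain ⟨ε, hε, hle⟩ := exists_pos_mul_norm_le_dotProduct hf
  refine ⟨ε, hε, fun x => ?_⟩
  rw [← one_mul (coneNorm K f x)]
  refine le_mul_coneNorm hK zero_le_one fun v hv w hw hx => ?_
  have hv' := hle v fun s hs => hs v hv
  have hw' := hle w fun s hs => hs w hw
  rw [hx, one_mul, dotProduct_add]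
  nlinarith [norm_sub_le v w]

end ConeNorm

section SpectralRadius

open Module.End

variable {n : Type*} [Fintype n] [DecidableEq n] {M : Matrix n n ℝ}

theorem hasEigenvalue_map_ofReal_of_transpose_mulVec_eq_smul {f : n → ℝ} (hf0 : f ≠ 0)
    {r : ℝ} (heig : Mᵀ *ᵥ f = r • f) :
    HasEigenvalue (toLin' (M.map Complex.ofReal)) (r : ℂ) := by
  have hT : HasEigenvalue (toLin' Mᵀ) r :=
    hasEigenvalue_of_hasEigenvector ⟨by simpa [mem_eigenspace_iff] using heig, hf0⟩
  rw [hasEigenvalue_iff_isRoot_charpoly, Matrix.charpoly_toLin', charpoly_transpose] at hT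
  rw [hasEigenvalue_iff_isRoot_charpoly, Matrix.charpoly_toLin']
  exact (charpoly_map M Complex.ofRealHom).symm ▸ hT.map

/-- The real and imaginary parts of an eigenvector for `z` have orbits of size `‖z‖ᵏ`. -/
theorem norm_le_of_hasEigenvalue_map_ofReal {r : ℝ} (hr : 0 < r)
    (hM : ∀ x : n → ℝ, ∃ C, ∀ k : ℕ, ‖(M ^ k) *ᵥ x‖ ≤ C * r ^ k) {z : ℂ}
    (hz : HasEigenvalue (toLin' (M.map Complex.ofReal)) z) : ‖z‖ ≤ r := by
  obtain ⟨w, hw⟩ := hz.exists_hasEigenvector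
  have hpow : ∀ k : ℕ, (M ^ k).map Complex.ofReal *ᵥ w = z ^ k • w := by
    intro k
    rw [show (M ^ k).map Complex.ofReal = M.map Complex.ofReal ^ k from
      Matrix.map_pow M Complex.ofRealHom k, ← toLin'_apply, Matrix.toLin'_pow, hw.pow_apply]
  obtain ⟨i, hi⟩ : ∃ i, w i ≠ 0 := Function.ne_iff.1 hw.2
  obtain ⟨Cu, hCu⟩ := hM fun j => (w j).re
  obtain ⟨Cv, hCv⟩ := hM fun j => (w j).im
  have hbound : ∀ k : ℕ, ‖z‖ ^ k * ‖w i‖ ≤ (Cu + Cv) * r ^ k := by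
    intro k
    set c := ((M ^ k).map Complex.ofReal *ᵥ w) i
    have hre : c.re = ((M ^ k) *ᵥ fun j => (w j).re) i := by
      simp [c, mulVec, dotProduct, Complex.re_sum]
    have him : c.im = ((M ^ k) *ᵥ fun j => (w j).im) i := by
      simp [c, mulVec, dotProduct, Complex.im_sum]
    calc ‖z‖ ^ k * ‖w i‖ = ‖c‖ := by simp [c, hpow, norm_pow]
      _ ≤ |c.re| + |c.im| := Complex.norm_le_abs_re_add_abs_im c
      _ ≤ Cu * r ^ k + Cv * r ^ k := by
        rw [hre, him]
        exact add_le_add ((norm_le_pi_norm _ i).trans (hCu k))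
          ((norm_le_pi_norm _ i).trans (hCv k))
      _ = (Cu + Cv) * r ^ k := by ring
  by_contra! hlt
  obtain ⟨k, hk⟩ := ((tendsto_pow_atTop_atTop_of_one_lt ((one_lt_div hr).2 hlt)).eventually_gt_atTop
    ((Cu + Cv) / ‖w i‖)).exists
  have := hbound k
  rw [div_pow, div_lt_div_iff₀ (norm_pos_iff.2 hi) (by positivity)] at hk
  linarith

end SpectralRadius

section PerronRoot

variable {d : ℕ} {K : Set (Fin d → ℝ)} {f : Fin d → ℝ} {M : Matrix (Fin d) (Fin d) ℝ} {r : ℝ}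

theorem IsProperCone.ne_zero_of_mem_interior (hK : IsProperCone K) (hd : 0 < d)
    {e : Fin d → ℝ} (he : e ∈ interior K) : e ≠ 0 := by
  rintro rfl
  refine hK.ne_univ hd (eq_univ_of_forall fun x => ?_)
  obtain ⟨δ, hδ, hmem⟩ := exists_pos_sub_smul_mem he (-x)
  simpa [smul_smul, inv_mul_cancel₀ hδ.ne'] using hK.smul_mem hmem (inv_pos.2 hδ).le

theorem coneNorm_pow_mulVec_le (hK : IsProperCone K) (hf : f ∈ dualConeSet K)
    (hM : LeavesInvariant M K) (hr : 0 ≤ r) (heig : Mᵀ *ᵥ f = r • f) (x : Fin d → ℝ) (k : ℕ) :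
    coneNorm K f ((M ^ k) *ᵥ x) ≤ r ^ k * coneNorm K f x := by
  induction k with
  | zero => simp
  | succ k ih =>
    rw [pow_succ', ← mulVec_mulVec, pow_succ', mul_assoc]
    exact (coneNorm_mulVec_le hK hf hM hr heig _).trans (mul_le_mul_of_nonneg_left ih hr)

theorem specRad_eq_of_transpose_mulVec_eq_smul (hK : IsProperCone K)
    (hf : f ∈ interior (dualConeSet K)) (hf0 : f ≠ 0) (hM : LeavesInvariant M K) (hr : 0 < r)
    (heig : Mᵀ *ᵥ f = r • f) : specRad M = r := by
  obtain ⟨ε, hε, hle⟩ := exists_pos_mul_norm_le_coneNorm hK hf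
  have horbit : ∀ x, ∃ C, ∀ k : ℕ, ‖(M ^ k) *ᵥ x‖ ≤ C * r ^ k := fun x =>
    ⟨coneNorm K f x / ε, fun k => by
      rw [div_mul_eq_mul_div, le_div_iff₀' hε, mul_comm (coneNorm K f x)]
      exact (hle _).trans
        (coneNorm_pow_mulVec_le hK (interior_subset hf) hM hr.le heig x k)⟩
  refine IsGreatest.csSup_eq ⟨⟨r, hasEigenvalue_map_ofReal_of_transpose_mulVec_eq_smul hf0 heig,
    by simp [abs_of_pos hr]⟩, ?_⟩
  rintro _ ⟨z, hz, rfl⟩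
  exact norm_le_of_hasEigenvalue_map_ofReal hr horbit hz

theorem opNorm_coneNorm_eq (hK : IsProperCone K) (hd : 0 < d)
    (hf : f ∈ interior (dualConeSet K)) (hM : LeavesInvariant M K) (hr : 0 ≤ r)
    (heig : Mᵀ *ᵥ f = r • f) : opNorm (coneNorm K f) M = r := by
  obtain ⟨ε, hε, hle⟩ := exists_pos_mul_norm_le_coneNorm hK hf
  have hpos : ∀ x ≠ 0, 0 < coneNorm K f x := fun x hx =>
    (mul_pos hε (norm_pos_iff.2 hx)).trans_le (hle x)
  obtain ⟨e, he⟩ := hK.2.2.2.1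
  have he0 := hK.ne_zero_of_mem_interior hd he
  have hfC := interior_subset hf
  refine IsGreatest.csSup_eq ⟨⟨e, he0, ?_⟩, ?_⟩
  · have hMe : coneNorm K f (M *ᵥ e) = r * coneNorm K f e := by
      rw [coneNorm_of_mem hK hfC (hM e (interior_subset he)),
        coneNorm_of_mem hK hfC (interior_subset he), ← transpose_mulVec_dotProduct, heig,
        smul_dotProduct, smul_eq_mul]
    rw [hMe, mul_div_cancel_right₀ _ (hpos e he0).ne']
  · rintro _ ⟨x, hx, rfl⟩
    exact div_le_of_le_mul₀ (coneNorm_nonneg hK hfC x) hr (coneNorm_mulVec_le hK hfC hM hr heig x)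

end PerronRoot

section RandomMatrix

instance matBorelSpace {d : ℕ} : BorelSpace (Matrix (Fin d) (Fin d) ℝ) :=
  inferInstanceAs (BorelSpace (Fin d → Fin d → ℝ))

variable {d : ℕ} {μ : Measure (Matrix (Fin d) (Fin d) ℝ)}

theorem ae_mem_msupport (hfull : μ (msupport μ)ᶜ = 0) : ∀ᵐ A ∂μ, A ∈ msupport μ :=
  mem_ae_iff.2 hfull

theorem integrable_of_continuous_of_isCompact_msupport [IsFiniteMeasure μ]
    (hsupp : IsCompact (msupport μ)) (hfull : μ (msupport μ)ᶜ = 0)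
    {g : Matrix (Fin d) (Fin d) ℝ → ℝ} (hg : Continuous g) : Integrable g μ := by
  obtain ⟨C, hC⟩ := hsupp.exists_bound_of_continuousOn hg.continuousOn
  exact Integrable.mono' (integrable_const C) hg.aestronglyMeasurable
    ((ae_mem_msupport hfull).mono hC)

variable (hint : ∀ i j, Integrable (fun X : Matrix (Fin d) (Fin d) ℝ => X i j) μ)
include hint

theorem integrable_dotProduct_mulVec (f v : Fin d → ℝ) :
    Integrable (fun X : Matrix (Fin d) (Fin d) ℝ => f ⬝ᵥ X *ᵥ v) μ := by
  simp only [dotProduct, mulVec]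
  exact integrable_finsetSum _ fun i _ =>
    (integrable_finsetSum _ fun j _ => (hint i j).mul_const _).const_mul _

theorem integral_dotProduct_mulVec (f v : Fin d → ℝ) :
    ∫ X, f ⬝ᵥ X *ᵥ v ∂μ = f ⬝ᵥ meanMat μ *ᵥ v := by
  simp only [dotProduct, mulVec, meanMat, of_apply]
  rw [integral_finsetSum _ fun i _ =>
    (integrable_finsetSum _ fun j _ => (hint i j).mul_const _).const_mul _]
  refine Finset.sum_congr rfl fun i _ => ?_
  rw [integral_const_mul, integral_finsetSum _ fun j _ => (hint i j).mul_const _]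
  simp only [integral_mul_const]

variable {K : Set (Fin d → ℝ)} {f : Fin d → ℝ} {r : ℝ}

theorem integral_coneNorm_mulVec_le (hK : IsProperCone K) (hf : f ∈ dualConeSet K)
    (hinv : ∀ᵐ A ∂μ, LeavesInvariant A K) (hr : 0 ≤ r) (heig : (meanMat μ)ᵀ *ᵥ f = r • f)
    (x : Fin d → ℝ) : ∫ X, coneNorm K f (X *ᵥ x) ∂μ ≤ r * coneNorm K f x := by
  refine le_mul_coneNorm hK hr fun v hv w hw hx => ?_
  have hdom : ∀ᵐ X ∂μ, coneNorm K f (X *ᵥ x) ≤ f ⬝ᵥ X *ᵥ (v + w) := hinv.mono fun A hA => by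
    simpa [hx, mulVec_sub, mulVec_add] using coneNorm_sub_le hK hf (hA v hv) (hA w hw)
  have hcont : Continuous fun X : Matrix (Fin d) (Fin d) ℝ => coneNorm K f (X *ᵥ x) :=
    (continuous_coneNorm hK hf).comp (continuous_id.matrix_mulVec continuous_const)
  have hbound := integrable_dotProduct_mulVec hint f (v + w)
  have hintegrable : Integrable (fun X => coneNorm K f (X *ᵥ x)) μ :=
    hbound.mono' hcont.aestronglyMeasurable <| hdom.mono fun X hX => by
      rwa [Real.norm_of_nonneg (coneNorm_nonneg hK hf _)]
  calc ∫ X, coneNorm K f (X *ᵥ x) ∂μ ≤ ∫ X, f ⬝ᵥ X *ᵥ (v + w) ∂μ :=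
        integral_mono_ae hintegrable hbound hdom
    _ = r * f ⬝ᵥ (v + w) := by
        rw [integral_dotProduct_mulVec hint, ← transpose_mulVec_dotProduct, heig,
          smul_dotProduct, smul_eq_mul]

end RandomMatrix

theorem specRad_fin_zero (M : Matrix (Fin 0) (Fin 0) ℝ) : specRad M = 0 := by
  rw [specRad, ← Real.sSup_empty]
  congr
  refine eq_empty_of_forall_notMem fun r ⟨z, hz, _⟩ => ?_
  obtain ⟨w, hw⟩ := hz.exists_hasEigenvector
  exact hw.2 (Subsingleton.elim _ _)

theorem opNorm_fin_zero (nrm : (Fin 0 → ℝ) → ℝ) (M : Matrix (Fin 0) (Fin 0) ℝ) :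
    opNorm nrm M = 0 := by
  rw [opNorm, ← Real.sSup_empty]
  congr
  exact eq_empty_of_forall_notMem fun r ⟨x, hx, _⟩ => hx (Subsingleton.elim _ _)

theorem coneNorm_zero_left {d : ℕ} {K : Set (Fin d → ℝ)} (hK : IsProperCone K)
    (x : Fin d → ℝ) : coneNorm K 0 x = 0 := by
  have h0 : (0 : Fin d → ℝ) ∈ dualConeSet K := fun _ _ => by simp
  refine le_antisymm ?_ (coneNorm_nonneg hK h0 x)
  obtain ⟨v, hv, w, hw, rfl⟩ := hK.exists_sub_eq x
  simpa using coneNorm_sub_le hK h0 hv hw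

theorem stmt_16_general {d : ℕ} (μ : Measure (Matrix (Fin d) (Fin d) ℝ)) [IsProbabilityMeasure μ]
    (hsupp : IsCompact (msupport μ)) (hfull : μ (msupport μ)ᶜ = 0)
    (K : Set (Fin d → ℝ)) (hK : IsProperCone K)
    (hinv : ∀ A ∈ msupport μ, LeavesInvariant A K)
    (hpos : IsKPos (meanMat μ) K) :
    ∃ f ∈ interior (dualConeSet K),
      (meanMat μ).transpose.mulVec f = specRad (meanMat μ) • f ∧
      opNorm (coneNorm K f) (meanMat μ) = specRad (meanMat μ) ∧
      ∀ x : Fin d → ℝ,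
        (∫ X, coneNorm K f (X.mulVec x) ∂μ) ≤ specRad (meanMat μ) * coneNorm K f x := by
  rcases Nat.eq_zero_or_pos d with rfl | hd
  · refine ⟨0, ?_, by simp, by rw [opNorm_fin_zero, specRad_fin_zero],
      fun x => by simp only [coneNorm_zero_left hK, integral_zero, mul_zero, le_refl]⟩
    simp [dualConeSet, dotProduct]
  obtain ⟨r, hr, f, hf, hf0, heig⟩ :=
    exists_transpose_eigenvector_mem_interior_dualConeSet hK hd hpos
  have hmean := hpos.leavesInvariant hK
  rw [specRad_eq_of_transpose_mulVec_eq_smul hK hf hf0 hmean hr heig]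
  have hint : ∀ i j, Integrable (fun X : Matrix (Fin d) (Fin d) ℝ => X i j) μ := fun i j =>
    integrable_of_continuous_of_isCompact_msupport hsupp hfull (continuous_id.matrix_elem i j)
  exact ⟨f, hf, heig, opNorm_coneNorm_eq hK hd hf hmean hr.le heig,
    integral_coneNorm_mulVec_le hint hK (interior_subset hf)
      ((ae_mem_msupport hfull).mono hinv) hr.le heig⟩

/-- If `supp μ` leaves a proper cone `K` invariant, `E[A]` is `K`-positive and
`ρ(E[A]) < 1`, then the cone linear absolute norm `‖·‖_f` induced by the left Perron eigenvector
`f ∈ int K*` of `E[A]` is a degree-1 homogeneous Lyapunov function: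
`E[‖Ax‖_f] ≤ ρ(E[A]) ‖x‖_f` for all `x`. -/
theorem stmt_16 {d : ℕ} (μ : Measure (Matrix (Fin d) (Fin d) ℝ)) [IsProbabilityMeasure μ]
    (hsupp : IsCompact (msupport μ)) (hfull : μ (msupport μ)ᶜ = 0)
    (K : Set (Fin d → ℝ)) (hK : IsProperCone K)
    (hinv : ∀ A ∈ msupport μ, LeavesInvariant A K)
    (hpos : IsKPos (meanMat μ) K) (hρ : specRad (meanMat μ) < 1) :
    ∃ f ∈ interior (dualConeSet K),
      (meanMat μ).transpose.mulVec f = specRad (meanMat μ) • f ∧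
      opNorm (coneNorm K f) (meanMat μ) = specRad (meanMat μ) ∧
      ∀ x : Fin d → ℝ,
        (∫ X, coneNorm K f (X.mulVec x) ∂μ) ≤ specRad (meanMat μ) * coneNorm K f x :=
  stmt_16_general μ hsupp hfull K hK hinv hpos
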